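/- arXiv:1504.03722 — 4 statements merged into one kernel-verified Lean document; each statement's English description precedes it below -/
import Mathlib

section
/- Let C ∈ (0,1), let {φ_i}_{i=1}^N be a frame for H_M with lower frame bound A, and set D = max_i ‖φ_i‖². Then for any unit norm x, the set K_x = {i : |⟨x,φ_i⟩|² > CA/N} satisfies |K_x| ≥ (1−C)·A/(D − CA/N) ≥ (1−C)·A/D. -/
open Finset
open scoped RealInnerProductSpace BigOperators

/-!
Split the coefficients of a unit vector `x` at the threshold `t = CA/N`. Each coefficient is at
most `D` by Cauchy–Schwarz, so the lower frame bound gives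
`A ≤ Σ ⟪x, φ i⟫² ≤ |K| D + (N - |K|) t`, i.e. `(1 - C) A ≤ |K| (D - t)`.
The same bound with `K` everything gives `A ≤ N D`, hence `t < D`, which allows the division.
-/

theorem real_inner_sq_le_norm_sq_of_norm_eq_one {H : Type*} [NormedAddCommGroup H]
    [InnerProductSpace ℝ H] {x : H} (hx : ‖x‖ = 1) (y : H) : ⟪x, y⟫ ^ 2 ≤ ‖y‖ ^ 2 := by
  simpa [sq_abs, hx] using pow_le_pow_left₀ (abs_nonneg _) (abs_real_inner_le_norm x y) 2

theorem sum_le_card_filter_lt_mul_add {ι : Type*} (s : Finset ι) (f : ι → ℝ) {t D : ℝ}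
    (hf : ∀ i ∈ s, f i ≤ D) :
    ∑ i ∈ s, f i ≤ #{i ∈ s | t < f i} * D + #{i ∈ s | ¬t < f i} * t := by
  rw [← sum_filter_add_sum_filter_not s (fun i => t < f i)]
  gcongr
  · simpa using sum_le_card_nsmul _ f D fun i hi => hf i (mem_filter.mp hi).1
  · simpa using sum_le_card_nsmul _ f t fun i hi => not_lt.mp (mem_filter.mp hi).2

theorem sub_card_mul_le_card_filter_lt_mul {ι : Type*} {s : Finset ι} {f : ι → ℝ} {t A D : ℝ}
    (hf : ∀ i ∈ s, f i ≤ D) (hA : A ≤ ∑ i ∈ s, f i) :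
    A - #s * t ≤ #{i ∈ s | t < f i} * (D - t) := by
  have hsum := sum_le_card_filter_lt_mul_add s f (t := t) hf
  have hcard : (#{i ∈ s | t < f i} : ℝ) + #{i ∈ s | ¬t < f i} = #s := by
    exact_mod_cast card_filter_add_card_filter_not _
  rw [← hcard]
  linarith

theorem card_large_frame_coeffs_ge_general
    {H : Type*} [NormedAddCommGroup H] [InnerProductSpace ℝ H]
    {N : ℕ}
    (C : ℝ) (hC : C ∈ Set.Ioo (0 : ℝ) 1)
    (φ : Fin N → H) (A D : ℝ) (hA : 0 < A)
    (hframe : ∀ x : H, A * ‖x‖ ^ 2 ≤ ∑ i, ⟪x, φ i⟫ ^ 2)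
    (hD : IsGreatest (Set.range fun i => ‖φ i‖ ^ 2) D)
    (x : H) (hx : ‖x‖ = 1) :
    (1 - C) * A / (D - C * A / N) ≤
        ((Finset.univ.filter fun i => C * A / N < ⟪x, φ i⟫ ^ 2).card : ℝ) ∧
      (1 - C) * A / D ≤ (1 - C) * A / (D - C * A / N) := by
  obtain ⟨hC0, hC1⟩ := hC
  have hcoeff : ∀ i ∈ univ, ⟪x, φ i⟫ ^ 2 ≤ D := fun i _ =>
    (real_inner_sq_le_norm_sq_of_norm_eq_one hx (φ i)).trans (hD.2 ⟨i, rfl⟩)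
  have hxA : A ≤ ∑ i, ⟪x, φ i⟫ ^ 2 := by simpa [hx] using hframe x
  have hAND : A ≤ N * D := by
    simpa using hxA.trans (sum_le_card_nsmul _ _ D hcoeff)
  have hN : (0 : ℝ) < N := by
    rcases N.eq_zero_or_pos with rfl | hN
    · simp at hxA; linarith
    · exact_mod_cast hN
  have ht : 0 < C * A / N := by positivity
  have htD : C * A / N < D := by
    rw [div_lt_iff₀ hN]; nlinarith
  have hK := sub_card_mul_le_card_filter_lt_mul (t := C * A / N) hcoeff hxA
  rw [card_univ, Fintype.card_fin, mul_div_cancel₀ _ hN.ne'] at hK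
  constructor
  · rw [div_le_iff₀ (sub_pos.mpr htD)]
    linarith
  · exact div_le_div_of_nonneg_left (by nlinarith) (sub_pos.mpr htD) (by linarith)

/-- lower bound on the number of frame coefficients bounded away from zero. -/
theorem card_large_frame_coeffs_ge
    {H : Type*} [NormedAddCommGroup H] [InnerProductSpace ℝ H]
    {M N : ℕ} [FiniteDimensional ℝ H] (hdim : Module.finrank ℝ H = M)
    (C : ℝ) (hC : C ∈ Set.Ioo (0 : ℝ) 1)
    (φ : Fin N → H) (A D : ℝ) (hA : 0 < A)
    (hframe : ∀ x : H, A * ‖x‖ ^ 2 ≤ ∑ i, ⟪x, φ i⟫ ^ 2)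
    (hD : IsGreatest (Set.range fun i => ‖φ i‖ ^ 2) D)
    (x : H) (hx : ‖x‖ = 1) :
    (1 - C) * A / (D - C * A / N) ≤
        ((Finset.univ.filter fun i => C * A / N < ⟪x, φ i⟫ ^ 2).card : ℝ) ∧
      (1 - C) * A / D ≤ (1 - C) * A / (D - C * A / N) :=
  card_large_frame_coeffs_ge_general C hC φ A D hA hframe hD x hx
end

section
/- Let {φ_i}_{i=1}^N be a frame for H_M with N ≥ 2M−1. Then {φ_i} has the complement property if and only if for every pair of nonzero vectors x, y ∈ H_M, Σ_{i=1}^N |⟨x,φ_i⟩||⟨y,φ_i⟩| ≠ 0. -/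
open Finset
open scoped RealInnerProductSpace BigOperators

private lemma mem_orth_span {H : Type*} [NormedAddCommGroup H] [InnerProductSpace ℝ H]
    {S : Set H} {x : H} (h : ∀ v ∈ S, ⟪x, v⟫ = 0) :
    x ∈ (Submodule.span ℝ S)ᗮ := by
  rw [Submodule.mem_orthogonal']
  intro u hu
  induction hu using Submodule.span_induction with
  | mem v hv => exact h v hv
  | zero => simp
  | add a b _ _ ha hb => rw [inner_add_right, ha, hb]; ring
  | smul c a _ ha => rw [real_inner_smul_right, ha]; ring

/-- complement property iff products of frame coefficients never all vanish. -/
theorem complement_property_iff_products_nonzero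
    {H : Type*} [NormedAddCommGroup H] [InnerProductSpace ℝ H]
    {M N : ℕ} [FiniteDimensional ℝ H] (hdim : Module.finrank ℝ H = M)
    (hN : 2 * M - 1 ≤ N)
    (φ : Fin N → H) (A B : ℝ) (hA : 0 < A) (hAB : A ≤ B)
    (hframe : ∀ x : H, A * ‖x‖ ^ 2 ≤ ∑ i, ⟪x, φ i⟫ ^ 2 ∧
      ∑ i, ⟪x, φ i⟫ ^ 2 ≤ B * ‖x‖ ^ 2) :
    (∀ I : Finset (Fin N),
        Submodule.span ℝ (φ '' (I : Set (Fin N))) = ⊤ ∨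
        Submodule.span ℝ (φ '' ((I : Set (Fin N))ᶜ)) = ⊤) ↔
      (∀ x y : H, x ≠ 0 → y ≠ 0 →
        ∑ i, |⟪x, φ i⟫| * |⟪y, φ i⟫| ≠ 0) := by
  constructor
  · intro hcp x y hx hy hsum
    have hterm : ∀ i ∈ Finset.univ, |⟪x, φ i⟫| * |⟪y, φ i⟫| = 0 := by
      rw [← Finset.sum_eq_zero_iff_of_nonneg
        (fun i _ => mul_nonneg (abs_nonneg _) (abs_nonneg _))] at *
      exact hsum
    set I : Finset (Fin N) := Finset.univ.filter (fun i => ⟪x, φ i⟫ = 0) with hI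
    rcases hcp I with h | h
    · apply hx
      have hxo : x ∈ (Submodule.span ℝ (φ '' (I : Set (Fin N))))ᗮ := by
        apply mem_orth_span
        rintro v ⟨i, hi, rfl⟩
        simp only [hI, Finset.coe_filter, Set.mem_setOf_eq] at hi
        exact hi.2
      rw [h, Submodule.top_orthogonal_eq_bot, Submodule.mem_bot] at hxo
      exact hxo
    · apply hy
      have hyo : y ∈ (Submodule.span ℝ (φ '' ((I : Set (Fin N))ᶜ)))ᗮ := by
        apply mem_orth_span
        rintro v ⟨i, hi, rfl⟩
        simp only [hI, Set.mem_compl_iff, Finset.coe_filter, Set.mem_setOf_eq,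
          Finset.mem_univ, true_and] at hi
        have := hterm i (Finset.mem_univ i)
        rcases mul_eq_zero.1 this with h1 | h2
        · exact absurd (abs_eq_zero.1 h1) hi
        · exact abs_eq_zero.1 h2
      rw [h, Submodule.top_orthogonal_eq_bot, Submodule.mem_bot] at hyo
      exact hyo
  · intro hprod I
    by_contra hcon
    push_neg at hcon
    obtain ⟨h1, h2⟩ := hcon
    have hx : ∃ x : H, x ∈ (Submodule.span ℝ (φ '' (I : Set (Fin N))))ᗮ ∧ x ≠ 0 := by
      have : (Submodule.span ℝ (φ '' (I : Set (Fin N))))ᗮ ≠ ⊥ := by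
        intro hbot
        exact h1 (Submodule.orthogonal_eq_bot_iff.mp hbot)
      exact Submodule.exists_mem_ne_zero_of_ne_bot this
    have hy : ∃ y : H, y ∈ (Submodule.span ℝ (φ '' ((I : Set (Fin N))ᶜ)))ᗮ ∧ y ≠ 0 := by
      have : (Submodule.span ℝ (φ '' ((I : Set (Fin N))ᶜ)))ᗮ ≠ ⊥ := by
        intro hbot
        exact h2 (Submodule.orthogonal_eq_bot_iff.mp hbot)
      exact Submodule.exists_mem_ne_zero_of_ne_bot this
    obtain ⟨x, hxmem, hx0⟩ := hx
    obtain ⟨y, hymem, hy0⟩ := hy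
    apply hprod x y hx0 hy0
    apply Finset.sum_eq_zero
    intro i _
    by_cases hi : i ∈ I
    · have : ⟪x, φ i⟫ = 0 := by
        have := (Submodule.mem_orthogonal' _ x).1 hxmem (φ i)
          (Submodule.subset_span ⟨i, hi, rfl⟩)
        exact this
      simp [this]
    · have : ⟪y, φ i⟫ = 0 := by
        have := (Submodule.mem_orthogonal' _ y).1 hymem (φ i)
          (Submodule.subset_span ⟨i, by simpa using hi, rfl⟩)
        exact this
      simp [this]
end

section
/- Let {φ_i}_{i=1}^N be an equiangular unit norm tight frame for H_M and fix j ∈ {1,…,N}. Then for every unit vector x ∈ H_M, Σ_{i=1}^N |⟨φ_j,φ_i⟩||⟨x,φ_i⟩| ≥ (N/M)·√((N−M)/(M(N−1))). -/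
open Finset
open scoped RealInnerProductSpace BigOperators

/-- lower bound for products of coefficients against a fixed frame vector in an
equiangular unit norm tight frame. -/
theorem equiangular_fixed_vector_lower_bound
    {H : Type*} [NormedAddCommGroup H] [InnerProductSpace ℝ H]
    {M N : ℕ} [FiniteDimensional ℝ H] (hdim : Module.finrank ℝ H = M)
    (φ : Fin N → H) (hnorm : ∀ i, ‖φ i‖ = 1)
    (htight : ∀ x : H, ∑ i, ⟪x, φ i⟫ ^ 2 = (N / M : ℝ) * ‖x‖ ^ 2)
    (hequi : ∀ i j : Fin N, i ≠ j →
      |⟪φ i, φ j⟫| = Real.sqrt (((N : ℝ) - M) / (M * ((N : ℝ) - 1))))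
    (j : Fin N) (x : H) (hx : ‖x‖ = 1) :
    (N / M : ℝ) * Real.sqrt (((N : ℝ) - M) / (M * ((N : ℝ) - 1))) ≤
      ∑ i, |⟪φ j, φ i⟫| * |⟪x, φ i⟫| := by
  set c := Real.sqrt (((N : ℝ) - M) / (M * ((N : ℝ) - 1))) with hc
  have hc0 : 0 ≤ c := Real.sqrt_nonneg _
  have hsum0 : (0:ℝ) ≤ ∑ i, |⟪φ j, φ i⟫| * |⟪x, φ i⟫| :=
    Finset.sum_nonneg fun i _ => mul_nonneg (abs_nonneg _) (abs_nonneg _)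
  rcases le_or_gt N 1 with hN | hN
  · interval_cases N
    · exact j.elim0
    · have hcz : c = 0 := by
        rw [hc]
        norm_num
      rw [hcz]
      simpa using hsum0
  -- N ≥ 2
  have : Nontrivial (Fin N) := Fin.nontrivial_iff_two_le.mpr hN
  obtain ⟨i₀, hi₀⟩ := exists_ne j
  have hc1 : c ≤ 1 := by
    have := hequi i₀ j hi₀
    rw [← this]
    calc |⟪φ i₀, φ j⟫| ≤ ‖φ i₀‖ * ‖φ j‖ := abs_real_inner_le_norm _ _
      _ = 1 := by rw [hnorm, hnorm]; ring
  have hcoef : ∀ i, c ≤ |⟪φ j, φ i⟫| := by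
    intro i
    rcases eq_or_ne j i with rfl | hne
    · have : ⟪φ j, φ j⟫ = 1 := by
        rw [real_inner_self_eq_norm_sq, hnorm]; norm_num
      rw [this]; simpa using hc1
    · rw [hequi j i hne]
  have hle1 : ∀ i, |⟪x, φ i⟫| ≤ 1 := by
    intro i
    calc |⟪x, φ i⟫| ≤ ‖x‖ * ‖φ i‖ := abs_real_inner_le_norm _ _
      _ = 1 := by rw [hx, hnorm]; ring
  have h2 : (N / M : ℝ) ≤ ∑ i, |⟪x, φ i⟫| := by
    have ht := htight x
    rw [hx, one_pow, mul_one] at ht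
    rw [← ht]
    apply Finset.sum_le_sum
    intro i _
    have : ⟪x, φ i⟫ ^ 2 = |⟪x, φ i⟫| * |⟪x, φ i⟫| := by
      rw [← abs_mul, abs_of_nonneg (mul_self_nonneg _), sq]
    rw [this]
    calc |⟪x, φ i⟫| * |⟪x, φ i⟫| ≤ 1 * |⟪x, φ i⟫| :=
          mul_le_mul_of_nonneg_right (hle1 i) (abs_nonneg _)
      _ = |⟪x, φ i⟫| := one_mul _
  calc (N / M : ℝ) * c = c * (N / M : ℝ) := mul_comm _ _
    _ ≤ c * ∑ i, |⟪x, φ i⟫| := mul_le_mul_of_nonneg_left h2 hc0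
    _ = ∑ i, c * |⟪x, φ i⟫| := Finset.mul_sum _ _ _
    _ ≤ ∑ i, |⟪φ j, φ i⟫| * |⟪x, φ i⟫| :=
        Finset.sum_le_sum fun i _ =>
          mul_le_mul_of_nonneg_right (hcoef i) (abs_nonneg _)
end

section
/- Let {φ_i}_{i=1}^N be a unit norm tight frame for ℝ^M with Σ_{i=1}^N φ_i = 0. Then for all unit vectors x, y ∈ ℝ^M, Σ_{i=1}^N ‖x−φ_i‖²‖y−φ_i‖² = 4N(1 + (1/M)⟨x,y⟩); in particular 4N(1 − 1/M) ≤ Σ_{i=1}^N ‖x−φ_i‖²‖y−φ_i‖² ≤ 4N(1 + 1/M). -/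
open Finset
open scoped RealInnerProductSpace BigOperators

/-- product of squared distances identity and bounds for a zero-sum unit norm
tight frame in ℝ^M. -/
theorem untf_sum_zero_product_distance
    (M N : ℕ) (hM : 0 < M) (φ : Fin N → EuclideanSpace ℝ (Fin M))
    (hnorm : ∀ i, ‖φ i‖ = 1)
    (hrecon : ∀ y : EuclideanSpace ℝ (Fin M),
      ∑ i, ⟪y, φ i⟫ • φ i = ((N : ℝ) / M) • y)
    (hsum : ∑ i, φ i = 0)
    (x y : EuclideanSpace ℝ (Fin M)) (hx : ‖x‖ = 1) (hy : ‖y‖ = 1) :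
    ∑ i, ‖x - φ i‖ ^ 2 * ‖y - φ i‖ ^ 2 = 4 * N * (1 + (1 / M : ℝ) * ⟪x, y⟫) ∧
      4 * N * (1 - (1 / M : ℝ)) ≤ ∑ i, ‖x - φ i‖ ^ 2 * ‖y - φ i‖ ^ 2 ∧
      ∑ i, ‖x - φ i‖ ^ 2 * ‖y - φ i‖ ^ 2 ≤ 4 * N * (1 + (1 / M : ℝ)) := by
  have hd : ∀ (z : EuclideanSpace ℝ (Fin M)), ‖z‖ = 1 → ∀ i,
      ‖z - φ i‖ ^ 2 = 2 * (1 - ⟪z, φ i⟫) := by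
    intro z hz i
    rw [norm_sub_sq_real, hz, hnorm]
    ring
  have hsx : ∑ i, ⟪x, φ i⟫ = 0 := by
    rw [← inner_sum, hsum, inner_zero_right]
  have hsy : ∑ i, ⟪y, φ i⟫ = 0 := by
    rw [← inner_sum, hsum, inner_zero_right]
  have hxy : ∑ i, ⟪x, φ i⟫ * ⟪y, φ i⟫ = (N : ℝ) / M * ⟪x, y⟫ := by
    have := congrArg (fun v => ⟪x, v⟫) (hrecon y)
    simp only [inner_sum, inner_smul_right] at this
    rw [← this]
    congr 1; ext i; ring
  have key : ∑ i, ‖x - φ i‖ ^ 2 * ‖y - φ i‖ ^ 2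
      = 4 * N * (1 + (1 / M : ℝ) * ⟪x, y⟫) := by
    have : ∀ i, ‖x - φ i‖ ^ 2 * ‖y - φ i‖ ^ 2
        = 4 - 4 * ⟪x, φ i⟫ - 4 * ⟪y, φ i⟫ + 4 * (⟪x, φ i⟫ * ⟪y, φ i⟫) := by
      intro i
      rw [hd x hx i, hd y hy i]
      ring
    rw [Finset.sum_congr rfl fun i _ => this i]
    rw [Finset.sum_add_distrib, Finset.sum_sub_distrib, Finset.sum_sub_distrib,
      ← Finset.mul_sum, ← Finset.mul_sum, ← Finset.mul_sum, hsx, hsy, hxy,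
      Finset.sum_const, Finset.card_univ, Fintype.card_fin]
    field_simp
    ring
  refine ⟨key, ?_, ?_⟩ <;> rw [key]
  · have h1 : (-1 : ℝ) ≤ ⟪x, y⟫ := by
      have := abs_real_inner_le_norm x y
      rw [hx, hy] at this
      nlinarith [abs_le.mp this]
    have hMpos : (0 : ℝ) < M := by exact_mod_cast hM
    have : (0:ℝ) ≤ N := Nat.cast_nonneg N
    have him : (0:ℝ) ≤ (1 / M : ℝ) := by positivity
    nlinarith [mul_le_mul_of_nonneg_left h1 him]
  · have h1 : ⟪x, y⟫ ≤ 1 := by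
      have := abs_real_inner_le_norm x y
      rw [hx, hy] at this
      nlinarith [abs_le.mp this]
    have hMpos : (0 : ℝ) < M := by exact_mod_cast hM
    have : (0:ℝ) ≤ N := Nat.cast_nonneg N
    have him : (0:ℝ) ≤ (1 / M : ℝ) := by positivity
    nlinarith [mul_le_mul_of_nonneg_left h1 him]
end
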